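/- arXiv:2404.05395 — 4 statements merged into one kernel-verified Lean document; each statement's English description precedes it below -/
import Mathlib

section
/- Let X be a real Hilbert space, a : X × X → ℝ a symmetric, continuous bilinear form that is coercive (there exists κ > 0 with κ‖z‖² ≤ a(z,z) for all z ∈ X), b : X → ℝ a continuous linear functional, and ψ : X → ℝ ∪ {∞} a convex, proper, lower semi-continuous functional. Then there exists a unique u ∈ X satisfying the variational inequality b(z−u) ≤ a(u, z−u) + ψ(z) − ψ(u) for all z ∈ X. -/
/-!
The solution is the minimiser of the energy `J z = a(z,z)/2 - b z + ψ z`. A continuous affine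
minorant of `ψ` (Hahn–Banach applied to its closed convex epigraph) together with coercivity bounds
`J` from below, and the identity
`a(tx+(1-t)y, tx+(1-t)y) = t a(x,x) + (1-t) a(y,y) - t(1-t) a(x-y,x-y)` makes `J` strongly
convex, so minimising sequences are Cauchy; by completeness and lower semicontinuity they converge
to a minimiser `u`. Comparing `J u` with `J (u + t(z-u))` and letting `t → 0` gives the variational
inequality (this is where the symmetry of `a` enters). Adding the inequalities of two solutions
`u`, `w` gives `a(u-w, u-w) ≤ 0`, hence `u = w` by coercivity.
-/

open Filter Topology Set

theorem exists_coe_isGLB_range {ι : Type*} {J : ι → EReal} {m₀ : ℝ}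
    (hm₀ : ∀ i, (m₀ : EReal) ≤ J i) (hne : ∃ i, J i ≠ ⊤) : ∃ m : ℝ, IsGLB (range J) m := by
  obtain ⟨i, hi⟩ := hne
  lift ⨅ i, J i to ℝ using
    ⟨ne_top_of_le_ne_top hi (iInf_le J i), ne_bot_of_le_ne_bot (EReal.coe_ne_bot m₀) (le_iInf hm₀)⟩
    with m hm
  exact ⟨m, hm ▸ isGLB_iInf⟩

theorem exists_forall_le_of_sublevel_dist_lt {α : Type*} [PseudoMetricSpace α] [CompleteSpace α]
    {J : α → EReal} (hJ : LowerSemicontinuous J) {m : ℝ} (hm : IsGLB (range J) m)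
    (hdist : ∀ ε > 0, ∃ δ > 0, ∀ p q, J p < ↑(m + δ) → J q < ↑(m + δ) → dist p q < ε) :
    ∃ u, ∀ z, J u ≤ J z := by
  have hseq (n : ℕ) : ∃ x, J x < ↑(m + 1 / (n + 1)) := by
    obtain ⟨_, ⟨x, rfl⟩, -, hx⟩ :=
      hm.exists_between (EReal.coe_lt_coe_iff.2 (lt_add_of_pos_right m Nat.one_div_pos_of_nat))
    exact ⟨x, hx⟩
  choose x hx using hseq
  have hcauchy : CauchySeq x := by
    refine Metric.cauchySeq_iff'.2 fun ε hε => ?_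
    obtain ⟨δ, hδ, hpq⟩ := hdist ε hε
    obtain ⟨N, hN⟩ := exists_nat_one_div_lt hδ
    have hsub (n : ℕ) (hn : N ≤ n) : J (x n) < ↑(m + δ) := by
      refine (hx n).trans (EReal.coe_lt_coe_iff.2 ?_)
      have : 1 / ((n : ℝ) + 1) ≤ 1 / (N + 1) := Nat.one_div_le_one_div hn
      linarith
    exact ⟨N, fun n hn => hpq _ _ (hsub n hn) (hsub N le_rfl)⟩
  obtain ⟨u, hu⟩ := cauchySeq_tendsto_of_complete hcauchy
  refine ⟨u, fun z => le_trans ?_ (hm.1 ⟨z, rfl⟩)⟩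
  by_contra! hlt
  obtain ⟨y, hmy, hyu⟩ := EReal.exists_between_coe_real hlt
  have hsmall : ∀ᶠ n : ℕ in atTop, m + 1 / ((n : ℝ) + 1) < y := by
    refine (tendsto_one_div_add_atTop_nhds_zero_nat.const_add m).eventually (gt_mem_nhds ?_)
    simpa using EReal.coe_lt_coe_iff.1 hmy
  obtain ⟨n, hyx, hxy⟩ := ((hu.eventually (hJ u y hyu)).and hsmall).exists
  exact lt_asymm ((hx n).trans (EReal.coe_lt_coe_iff.2 hxy)) hyx

section Convex

variable {X : Type*} [NormedAddCommGroup X] [NormedSpace ℝ X] {ψ : X → EReal}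

theorem convexOn_toReal (hconv : ∀ x y : X, ∀ t : ℝ, 0 ≤ t → t ≤ 1 →
      ψ (t • x + (1 - t) • y) ≤ (t : EReal) * ψ x + ((1 - t : ℝ) : EReal) * ψ y)
    (hnbot : ∀ x, ψ x ≠ ⊥) : ConvexOn ℝ {x | ψ x ≠ ⊤} fun x => (ψ x).toReal := by
  have key : ∀ x ∈ {x | ψ x ≠ ⊤}, ∀ y ∈ {x | ψ x ≠ ⊤}, ∀ s t : ℝ, 0 ≤ s → 0 ≤ t → s + t = 1 →
      ψ (s • x + t • y) ≤ ↑(s * (ψ x).toReal + t * (ψ y).toReal) := by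
    intro x hx y hy s t hs ht hst
    obtain rfl : t = 1 - s := by linarith
    have h := hconv x y s hs (by linarith)
    rwa [← EReal.coe_toReal hx (hnbot x), ← EReal.coe_toReal hy (hnbot y), ← EReal.coe_mul,
      ← EReal.coe_mul, ← EReal.coe_add] at h
  refine ⟨fun x hx y hy s t hs ht hst => ne_top_of_le_ne_top (EReal.coe_ne_top _)
    (key x hx y hy s t hs ht hst), fun x hx y hy s t hs ht hst => ?_⟩
  exact (EReal.toReal_le_toReal (key x hx y hy s t hs ht hst) (hnbot _)
    (EReal.coe_ne_top _)).trans_eq (EReal.toReal_coe _)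

theorem le_coe_convex_comb (hψ : ConvexOn ℝ {x | ψ x ≠ ⊤} fun x => (ψ x).toReal) {x y : X}
    {r s t : ℝ} (hx : ψ x = r) (hy : ψ y = s) (ht₀ : 0 ≤ t) (ht₁ : t ≤ 1) :
    ψ (t • x + (1 - t) • y) ≤ ↑(t * r + (1 - t) * s) := by
  have hxd : x ∈ {x | ψ x ≠ ⊤} := by simp [hx]
  have hyd : y ∈ {x | ψ x ≠ ⊤} := by simp [hy]
  have hw := hψ.1 hxd hyd ht₀ (sub_nonneg.2 ht₁) (add_sub_cancel t 1)
  refine (EReal.le_coe_toReal hw).trans (EReal.coe_le_coe_iff.2 ?_)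
  simpa [hx, hy] using hψ.2 hxd hyd ht₀ (sub_nonneg.2 ht₁) (add_sub_cancel t 1)

theorem exists_continuousLinearMap_add_le (hψ : ConvexOn ℝ {x | ψ x ≠ ⊤} fun x => (ψ x).toReal)
    (hproper : ∃ x, ψ x ≠ ⊤) (hnbot : ∀ x, ψ x ≠ ⊥) (hlsc : LowerSemicontinuous ψ) :
    ∃ (g : X →L[ℝ] ℝ) (c : ℝ), ∀ z, ((g z + c : ℝ) : EReal) ≤ ψ z := by
  obtain ⟨x₀, hx₀⟩ := hproper
  lift ψ x₀ to ℝ using ⟨hx₀, hnbot x₀⟩ with r₀ hr₀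
  set E := {p : X × ℝ | ψ p.1 ≤ p.2}
  have hE : E = {p | p.1 ∈ {x | ψ x ≠ ⊤} ∧ (ψ p.1).toReal ≤ p.2} := by
    ext ⟨x, r⟩
    rcases eq_or_ne (ψ x) ⊤ with hx | hx
    · simp [E, hx]
    lift ψ x to ℝ using ⟨hx, hnbot x⟩ with s hs
    simp [E, ← hs]
  have hEclosed : IsClosed E := hlsc.isClosed_epigraph.preimage
    (continuous_fst.prodMk (continuous_coe_real_ereal.comp continuous_snd))
  obtain ⟨f, μ, hfμ, hEμ⟩ := geometric_hahn_banach_point_closed (hE ▸ hψ.convex_epigraph) hEclosed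
    (x := (x₀, r₀ - 1)) (by simp [E, ← hr₀, -EReal.coe_sub])
  have hsplit (z : X) (t : ℝ) : f (z, t) = f (z, 0) + t * f (0, 1) := by
    rw [← smul_eq_mul, ← map_smul, ← map_add]; simp
  have hβ : 0 < f (0, 1) := by
    have := hEμ (x₀, r₀) (by simp [E, ← hr₀])
    rw [hsplit] at this hfμ
    linarith
  -- normalising `f` on the vertical direction `(0, 1)` turns the separating hyperplane into a graph
  refine ⟨-(f (0, 1))⁻¹ • f.comp (.inl ℝ X ℝ), μ / f (0, 1), fun z => ?_⟩
  rcases eq_or_ne (ψ z) ⊤ with hz | hz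
  · simp [hz]
  lift ψ z to ℝ using ⟨hz, hnbot z⟩ with s hs
  have := hEμ (z, s) (by simp [E, ← hs])
  rw [hsplit] at this
  rw [EReal.coe_le_coe_iff]
  simp only [smul_apply, ContinuousLinearMap.comp_apply, ContinuousLinearMap.inl_apply,
    smul_eq_mul]
  field_simp
  linarith

end Convex

section Energy

variable {X : Type*} [NormedAddCommGroup X] [NormedSpace ℝ X]

noncomputable def energy (a : X →L[ℝ] X →L[ℝ] ℝ) (b : X →L[ℝ] ℝ) (ψ : X → EReal) (z : X) : EReal :=
  ((a z z / 2 - b z : ℝ) : EReal) + ψ z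

def SolvesVarIneq (a : X →L[ℝ] X →L[ℝ] ℝ) (b : X →L[ℝ] ℝ) (ψ : X → EReal) (u : X) : Prop :=
  ∀ z : X, ((b (z - u) : ℝ) : EReal) + ψ u ≤ ((a u (z - u) : ℝ) : EReal) + ψ z

variable {a : X →L[ℝ] X →L[ℝ] ℝ} {b : X →L[ℝ] ℝ} {ψ : X → EReal}

theorem apply_convex_comb_self (a : X →L[ℝ] X →L[ℝ] ℝ) (x y : X) (t : ℝ) :
    a (t • x + (1 - t) • y) (t • x + (1 - t) • y) =
      t * a x x + (1 - t) * a y y - t * (1 - t) * a (x - y) (x - y) := by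
  simp only [map_add, map_smul, add_apply, smul_apply, smul_eq_mul, map_sub, sub_apply]
  ring

theorem energy_of_eq_coe {x : X} {r : ℝ} (hx : ψ x = r) :
    energy a b ψ x = ↑(a x x / 2 - b x + r) := by
  rw [energy, hx, EReal.coe_add]

theorem energy_eq_top {x : X} (hx : ψ x = ⊤) : energy a b ψ x = ⊤ := by
  rw [energy, hx, EReal.coe_add_top]

theorem energy_ne_top {x : X} (hx : ψ x ≠ ⊤) : energy a b ψ x ≠ ⊤ :=
  EReal.add_ne_top (EReal.coe_ne_top _) hx

theorem lowerSemicontinuous_energy (a : X →L[ℝ] X →L[ℝ] ℝ) (b : X →L[ℝ] ℝ)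
    (hlsc : LowerSemicontinuous ψ) : LowerSemicontinuous (energy a b ψ) := by
  have hcont : Continuous fun z => a z z / 2 - b z := by fun_prop
  exact (continuous_coe_real_ereal.comp hcont).lowerSemicontinuous.add' hlsc fun z =>
    EReal.continuousAt_add (.inl (EReal.coe_ne_top _)) (.inl (EReal.coe_ne_bot _))

theorem energy_convex_comb_le (hψ : ConvexOn ℝ {x | ψ x ≠ ⊤} fun x => (ψ x).toReal) {x y : X}
    {r s t : ℝ} (hx : ψ x = r) (hy : ψ y = s) (ht₀ : 0 ≤ t) (ht₁ : t ≤ 1) :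
    energy a b ψ (t • x + (1 - t) • y) ≤ ↑(t * (a x x / 2 - b x + r) +
      (1 - t) * (a y y / 2 - b y + s) - t * (1 - t) / 2 * a (x - y) (x - y)) := by
  calc energy a b ψ (t • x + (1 - t) • y)
      ≤ ↑(a (t • x + (1 - t) • y) (t • x + (1 - t) • y) / 2 - b (t • x + (1 - t) • y)) +
          ↑(t * r + (1 - t) * s) := add_le_add le_rfl (le_coe_convex_comb hψ hx hy ht₀ ht₁)
    _ = _ := by
      rw [← EReal.coe_add, apply_convex_comb_self, map_add, map_smul, map_smul, smul_eq_mul,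
        smul_eq_mul]
      ring_nf

theorem exists_coe_le_energy {κ : ℝ} (hκ : 0 < κ) (hcoer : ∀ z : X, κ * ‖z‖ ^ 2 ≤ a z z)
    {g : X →L[ℝ] ℝ} {c : ℝ} (hg : ∀ z, ((g z + c : ℝ) : EReal) ≤ ψ z) :
    ∃ m₀ : ℝ, ∀ z, (m₀ : EReal) ≤ energy a b ψ z := by
  refine ⟨c - (‖b‖ + ‖g‖) ^ 2 / (2 * κ), fun z => ?_⟩
  calc ((c - (‖b‖ + ‖g‖) ^ 2 / (2 * κ) : ℝ) : EReal)
      ≤ ↑(a z z / 2 - b z + (g z + c)) := by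
        rw [EReal.coe_le_coe_iff]
        have hb := (abs_le.1 ((b.le_opNorm z).trans_eq' (Real.norm_eq_abs _).symm)).2
        have hg := (abs_le.1 ((g.le_opNorm z).trans_eq' (Real.norm_eq_abs _).symm)).1
        have hsq : 0 ≤ (κ * ‖z‖ - (‖b‖ + ‖g‖)) ^ 2 / (2 * κ) := by positivity
        have hid : (κ * ‖z‖ - (‖b‖ + ‖g‖)) ^ 2 / (2 * κ) =
            κ / 2 * ‖z‖ ^ 2 - (‖b‖ + ‖g‖) * ‖z‖ + (‖b‖ + ‖g‖) ^ 2 / (2 * κ) := by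
          field_simp; ring
        nlinarith [hcoer z]
    _ ≤ energy a b ψ z := by
        rw [energy, EReal.coe_add]
        exact add_le_add le_rfl (hg z)

theorem sq_norm_sub_lt_of_energy_lt {κ : ℝ} (hcoer : ∀ z : X, κ * ‖z‖ ^ 2 ≤ a z z)
    (hψ : ConvexOn ℝ {x | ψ x ≠ ⊤} fun x => (ψ x).toReal) (hnbot : ∀ x, ψ x ≠ ⊥) {m δ : ℝ}
    (hm : ∀ z, (m : EReal) ≤ energy a b ψ z) {p q : X} (hp : energy a b ψ p < ↑(m + δ))
    (hq : energy a b ψ q < ↑(m + δ)) : κ * ‖p - q‖ ^ 2 < 8 * δ := by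
  have hp' : ψ p ≠ ⊤ := fun h => hp.ne_top (energy_eq_top h)
  have hq' : ψ q ≠ ⊤ := fun h => hq.ne_top (energy_eq_top h)
  lift ψ p to ℝ using ⟨hp', hnbot p⟩ with r hr
  lift ψ q to ℝ using ⟨hq', hnbot q⟩ with s hs
  rw [energy_of_eq_coe hr.symm, EReal.coe_lt_coe_iff] at hp
  rw [energy_of_eq_coe hs.symm, EReal.coe_lt_coe_iff] at hq
  have hmid := (hm _).trans (energy_convex_comb_le hψ hr.symm hs.symm (t := 1 / 2)
    (by norm_num) (by norm_num))
  rw [EReal.coe_le_coe_iff] at hmid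
  linarith [hcoer (p - q)]

theorem solvesVarIneq_of_forall_energy_le (hsym : ∀ x y, a x y = a y x)
    (hψ : ConvexOn ℝ {x | ψ x ≠ ⊤} fun x => (ψ x).toReal) (hnbot : ∀ x, ψ x ≠ ⊥) {u : X}
    (hu : ∀ z, energy a b ψ u ≤ energy a b ψ z) : SolvesVarIneq a b ψ u := by
  intro z
  rcases eq_or_ne (ψ z) ⊤ with hz | hz
  · rw [hz, EReal.coe_add_top]
    exact le_top
  have hu' : ψ u ≠ ⊤ := fun h =>
    energy_ne_top hz (top_le_iff.1 (energy_eq_top h ▸ hu z))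
  lift ψ z to ℝ using ⟨hz, hnbot z⟩ with s hs
  lift ψ u to ℝ using ⟨hu', hnbot u⟩ with r hr
  rw [← EReal.coe_add, ← EReal.coe_add, EReal.coe_le_coe_iff]
  have hsegment : ∀ t ∈ Ioo (0 : ℝ) 1, a u u / 2 - b u + r + (1 - t) / 2 * a (z - u) (z - u) ≤
      a z z / 2 - b z + s := by
    rintro t ⟨ht₀, ht₁⟩
    have h := (hu _).trans (energy_convex_comb_le hψ hs.symm hr.symm ht₀.le ht₁.le)
    rw [energy_of_eq_coe hr.symm, EReal.coe_le_coe_iff] at h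
    nlinarith
  have hlim : Tendsto (fun t : ℝ => a u u / 2 - b u + r + (1 - t) / 2 * a (z - u) (z - u))
      (𝓝[>] 0) (𝓝 (a u u / 2 - b u + r + (1 - 0) / 2 * a (z - u) (z - u))) :=
    (Continuous.tendsto (by fun_prop) 0).mono_left nhdsWithin_le_nhds
  have hvar := le_of_tendsto hlim (mem_of_superset (Ioo_mem_nhdsGT one_pos) hsegment)
  simp only [map_sub, sub_apply] at hvar ⊢
  linarith [hsym u z]

theorem SolvesVarIneq.ne_top {u : X} (hu : SolvesVarIneq a b ψ u) (hproper : ∃ x, ψ x ≠ ⊤) :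
    ψ u ≠ ⊤ := by
  obtain ⟨x₀, hx₀⟩ := hproper
  intro h
  have := hu x₀
  rw [h, EReal.coe_add_top, top_le_iff] at this
  exact EReal.add_ne_top (EReal.coe_ne_top _) hx₀ this

theorem SolvesVarIneq.eq {κ : ℝ} (hκ : 0 < κ) (hcoer : ∀ z : X, κ * ‖z‖ ^ 2 ≤ a z z)
    (hproper : ∃ x, ψ x ≠ ⊤) (hnbot : ∀ x, ψ x ≠ ⊥) {u w : X} (hu : SolvesVarIneq a b ψ u)
    (hw : SolvesVarIneq a b ψ w) : u = w := by
  have huw := hu w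
  have hwu := hw u
  lift ψ u to ℝ using ⟨hu.ne_top hproper, hnbot u⟩ with r hr
  lift ψ w to ℝ using ⟨hw.ne_top hproper, hnbot w⟩ with s hs
  rw [← EReal.coe_add, ← EReal.coe_add, EReal.coe_le_coe_iff] at huw hwu
  have hsq : κ * ‖u - w‖ ^ 2 ≤ 0 := by
    have := hcoer (u - w)
    simp only [map_sub, sub_apply] at huw hwu this
    linarith
  rw [← sub_eq_zero, ← norm_eq_zero]
  exact (sq_nonpos_iff _).1 (nonpos_of_mul_nonpos_right hsq hκ)

end Energy

/-- Existence and uniqueness of the solution of a variational inequality of the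
second kind: `X` a real Hilbert space, `a` a symmetric continuous coercive
bilinear form, `b` a continuous linear functional, `ψ : X → ℝ ∪ {∞}` convex,
proper and lower semi-continuous. The inequality
`b(z−u) ≤ a(u,z−u) + ψ(z) − ψ(u)` is stated additively in `EReal` as
`b(z−u) + ψ(u) ≤ a(u,z−u) + ψ(z)`. -/
theorem stmt_0 {X : Type*} [NormedAddCommGroup X] [InnerProductSpace ℝ X]
    [CompleteSpace X]
    (a : X →L[ℝ] X →L[ℝ] ℝ) (b : X →L[ℝ] ℝ) (ψ : X → EReal)
    (hsym : ∀ x y, a x y = a y x)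
    (κ : ℝ) (hκ : 0 < κ) (hcoer : ∀ z : X, κ * ‖z‖ ^ 2 ≤ a z z)
    (hconv : ∀ x y : X, ∀ t : ℝ, 0 ≤ t → t ≤ 1 →
      ψ (t • x + (1 - t) • y) ≤ (t : EReal) * ψ x + ((1 - t : ℝ) : EReal) * ψ y)
    (hproper : ∃ x, ψ x ≠ ⊤) (hnbot : ∀ x, ψ x ≠ ⊥)
    (hlsc : LowerSemicontinuous ψ) :
    ∃! u : X, ∀ z : X,
      ((b (z - u) : ℝ) : EReal) + ψ u ≤ ((a u (z - u) : ℝ) : EReal) + ψ z := by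
  have hψ := convexOn_toReal hconv hnbot
  obtain ⟨g, c, hg⟩ := exists_continuousLinearMap_add_le hψ hproper hnbot hlsc
  obtain ⟨m₀, hm₀⟩ := exists_coe_le_energy (b := b) hκ hcoer hg
  obtain ⟨m, hm⟩ := exists_coe_isGLB_range hm₀ (hproper.imp fun _ => energy_ne_top)
  have hdist : ∀ ε > 0, ∃ δ > 0, ∀ p q, energy a b ψ p < ↑(m + δ) →
      energy a b ψ q < ↑(m + δ) → dist p q < ε := by
    intro ε hε
    refine ⟨κ * ε ^ 2 / 8, by positivity, fun p q hp hq => ?_⟩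
    have hpq := sq_norm_sub_lt_of_energy_lt hcoer hψ hnbot (fun z => hm.1 ⟨z, rfl⟩) hp hq
    rw [dist_eq_norm]
    exact lt_of_pow_lt_pow_left₀ 2 hε.le (by nlinarith)
  obtain ⟨u, hu⟩ :=
    exists_forall_le_of_sublevel_dist_lt (lowerSemicontinuous_energy a b hlsc) hm hdist
  have hsol := solvesVarIneq_of_forall_energy_le hsym hψ hnbot hu
  exact ⟨u, hsol, fun w hw => SolvesVarIneq.eq hκ hcoer hproper hnbot hw hsol⟩
end

section
/- Let (η_ℓ)_{ℓ≥0} be a sequence of nonnegative reals with uniform R-linear convergence: there are C_lin ≥ 1 and 0 < q < 1 such that η_{ℓ+k}² ≤ C_lin q^k η_ℓ² for all ℓ, k ≥ 0. Then for every s > 0 there is a constant C(s) > 0 such that ∑_{j=0}^{ℓ−1} η_j^{−1/s} ≤ C(s) η_ℓ^{−1/s} for all ℓ ≥ 1 with η_ℓ > 0. -/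
/-!
Reading the R-linear convergence backwards, `η_ℓ ≤ √(C_lin q^(ℓ-j)) η_j` for `j ≤ ℓ`, so
`η_j^(-1/s) ≤ √C_lin^(1/s) r^(ℓ-j) η_ℓ^(-1/s)` with `r = √q^(1/s) < 1`. Summing over `j < ℓ`
bounds the left-hand side by a geometric series times `η_ℓ^(-1/s)`.
-/

open Finset

theorem sum_range_pow_sub_le {r : ℝ} (h0 : 0 ≤ r) (h1 : r < 1) (n : ℕ) :
    ∑ j ∈ range n, r ^ (n - j) ≤ r / (1 - r) := by
  calc ∑ j ∈ range n, r ^ (n - j) = ∑ i ∈ Ico 1 (n + 1), r ^ i := by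
        rw [sum_Ico_eq_sum_range, ← sum_range_reflect]
        refine sum_congr (by simp) fun j hj => ?_
        rw [mem_range] at hj
        congr 1
        omega
    _ ≤ r / (1 - r) := by simpa using geom_sum_Ico_le_of_lt_one h0 h1 (m := 1) (n := n + 1)

theorem sum_range_le_of_le_mul_pow_sub {a : ℕ → ℝ} {A r : ℝ} {ℓ : ℕ} (hA : 0 ≤ A)
    (hr0 : 0 ≤ r) (hr1 : r < 1) (haℓ : 0 ≤ a ℓ)
    (h : ∀ j < ℓ, a j ≤ A * r ^ (ℓ - j) * a ℓ) :
    ∑ j ∈ range ℓ, a j ≤ A * (r / (1 - r)) * a ℓ :=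
  calc ∑ j ∈ range ℓ, a j ≤ ∑ j ∈ range ℓ, A * r ^ (ℓ - j) * a ℓ :=
        sum_le_sum fun j hj => h j (mem_range.mp hj)
    _ = A * (∑ j ∈ range ℓ, r ^ (ℓ - j)) * a ℓ := by rw [mul_sum, sum_mul]
    _ ≤ A * (r / (1 - r)) * a ℓ := by gcongr; exact sum_range_pow_sub_le hr0 hr1 ℓ

theorem Real.rpow_neg_le_of_le_mul {x y c p : ℝ} (hx : 0 < x) (hy : 0 < y) (hc : 0 ≤ c)
    (hp : 0 ≤ p) (h : y ≤ c * x) : x ^ (-p) ≤ c ^ p * y ^ (-p) := by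
  have hyp : y ^ p ≤ c ^ p * x ^ p := by
    rw [← Real.mul_rpow hc hx.le]
    exact Real.rpow_le_rpow hy.le h hp
  rw [Real.rpow_neg hx.le, Real.rpow_neg hy.le, ← div_eq_mul_inv, le_div_iff₀ (by positivity),
    inv_mul_le_iff₀ (by positivity), mul_comm]
  exact hyp

theorem Real.rpow_neg_le_of_sq_le_mul_sq {x y c p : ℝ} (hx : 0 ≤ x) (hy : 0 < y) (hp : 0 ≤ p)
    (h : y ^ 2 ≤ c * x ^ 2) : x ^ (-p) ≤ √c ^ p * y ^ (-p) := by
  have hyx : y ≤ √c * x := by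
    rw [← Real.sqrt_sq hy.le, ← Real.sqrt_sq hx, ← Real.sqrt_mul' c (sq_nonneg x)]
    exact Real.sqrt_le_sqrt h
  have hx' : 0 < x := pos_of_mul_pos_right (hy.trans_le hyx) (Real.sqrt_nonneg c)
  exact Real.rpow_neg_le_of_le_mul hx' hy (Real.sqrt_nonneg c) hp hyx

theorem rpow_neg_le_of_sq_le_mul_pow {η : ℕ → ℝ} {C q p : ℝ} (hη : ∀ j, 0 ≤ η j) (hC : 0 ≤ C)
    (hq : 0 ≤ q) (hp : 0 ≤ p) (hlin : ∀ ℓ k, η (ℓ + k) ^ 2 ≤ C * q ^ k * η ℓ ^ 2)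
    {j ℓ : ℕ} (hjℓ : j ≤ ℓ) (hηℓ : 0 < η ℓ) :
    η j ^ (-p) ≤ √C ^ p * (√q ^ p) ^ (ℓ - j) * η ℓ ^ (-p) := by
  have h := hlin j (ℓ - j)
  rw [Nat.add_sub_cancel' hjℓ] at h
  convert Real.rpow_neg_le_of_sq_le_mul_sq (hη j) hηℓ hp h using 2
  have hsqrt : √(q ^ (ℓ - j)) = √q ^ (ℓ - j) := by
    rw [← Real.sqrt_sq (by positivity : 0 ≤ √q ^ (ℓ - j)), ← pow_mul, mul_comm, pow_mul,
      Real.sq_sqrt hq]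
  rw [Real.sqrt_mul hC, hsqrt, Real.mul_rpow (Real.sqrt_nonneg _) (by positivity),
    Real.rpow_pow_comm (Real.sqrt_nonneg q)]

/-- Inverse summability of an R-linearly convergent estimator sequence: if
`η_{ℓ+k}² ≤ C_lin q^k η_ℓ²`, then for every `s > 0` the partial sums of
`η_j^{-1/s}` are bounded by a constant multiple of `η_ℓ^{-1/s}`. -/
theorem stmt_7 (η : ℕ → ℝ) (Clin q : ℝ)
    (hη : ∀ ℓ, 0 ≤ η ℓ) (hClin : 1 ≤ Clin) (hq0 : 0 < q) (hq1 : q < 1)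
    (hlin : ∀ ℓ k, η (ℓ + k) ^ 2 ≤ Clin * q ^ k * η ℓ ^ 2)
    (s : ℝ) (hs : 0 < s) :
    ∃ C : ℝ, 0 < C ∧ ∀ ℓ : ℕ, 1 ≤ ℓ → 0 < η ℓ →
      ∑ j ∈ Finset.range ℓ, η j ^ (-(1 / s)) ≤ C * η ℓ ^ (-(1 / s)) := by
  set r := √q ^ (1 / s)
  have hr0 : 0 < r := by positivity
  have hr1 : r < 1 :=
    Real.rpow_lt_one (Real.sqrt_nonneg q) ((Real.sqrt_lt' one_pos).2 (by simpa)) (by positivity)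
  refine ⟨√Clin ^ (1 / s) * (r / (1 - r)), by have := sub_pos.2 hr1; positivity, ?_⟩
  intro ℓ _ hηℓ
  refine sum_range_le_of_le_mul_pow_sub (by positivity) hr0.le hr1 (Real.rpow_nonneg (hη ℓ) _)
    fun j hj => ?_
  exact rpow_neg_le_of_sq_le_mul_pow hη (by linarith) hq0.le (by positivity) hlin hj.le hηℓ
end

section
/- Let η, η̂, d ≥ 0 and constants C₁, C₄ > 0, 0 < ρ₂ < 1, and suppose: (i) (stability on non-refined elements) |η̂_S − η_S| ≤ C₁ d where η_S², η̂_S² denote the sums of squared indicators over common elements; (ii) (reduction) η̂² − η̂_S² ≤ ρ₂(η² − η_S²) + C₂ d²; (iii) (discrete reliability) d² ≤ C₄² (η² − η_S²). Then there is a constant C_mon ≥ 1 depending only on C₁, C₂, C₄, ρ₂ such that η̂ ≤ C_mon η (quasi-monotonicity of the estimator under refinement). -/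
/-! Splitting `η̂²` into its refined and non-refined parts, reduction bounds the refined part
and stability bounds the non-refined part by `η_S` and `d`; discrete reliability then controls
`d²`, hence everything, by `η²`. -/

open Real

theorem sq_le_two_mul_sq_add_of_abs_sub_le {a b c : ℝ} (hb : 0 ≤ b) (h : |b - a| ≤ c) :
    b ^ 2 ≤ 2 * (a ^ 2 + c ^ 2) :=
  calc b ^ 2 ≤ (a + c) ^ 2 := pow_le_pow_left₀ hb (by linarith [le_of_abs_le h]) 2
    _ ≤ 2 * (a ^ 2 + c ^ 2) := add_sq_le

theorem le_sqrt_mul_of_sq_le_mul_sq {x y K : ℝ} (hy : 0 ≤ y) (h : x ^ 2 ≤ K * y ^ 2) :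
    x ≤ √K * y :=
  calc x ≤ √(x ^ 2) := by rw [sqrt_sq_eq_abs]; exact le_abs_self x
    _ ≤ √(K * y ^ 2) := sqrt_le_sqrt h
    _ = √K * y := by rw [sqrt_mul' K (sq_nonneg y), sqrt_sq hy]

def quasiMonotonicityConstantSq (C₁ C₂ C₄ ρ₂ : ℝ) : ℝ :=
  2 + 2 * C₁ ^ 2 * C₄ ^ 2 + ρ₂ + C₂ * C₄ ^ 2

theorem one_le_quasiMonotonicityConstantSq {C₁ C₂ C₄ ρ₂ : ℝ} (hC₂ : 0 ≤ C₂) (hρ₂ : 0 ≤ ρ₂) :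
    1 ≤ quasiMonotonicityConstantSq C₁ C₂ C₄ ρ₂ := by
  unfold quasiMonotonicityConstantSq
  nlinarith [sq_nonneg (C₁ * C₄), mul_nonneg hC₂ (sq_nonneg C₄)]

theorem sq_le_quasiMonotonicityConstantSq_mul_sq {C₁ C₂ C₄ ρ₂ η ηhat d ηS ηhatS : ℝ}
    (hC₂ : 0 ≤ C₂) (hρ₂ : 0 ≤ ρ₂) (hηhatS : 0 ≤ ηhatS) (hηS : ηS ^ 2 ≤ η ^ 2)
    (hstab : |ηhatS - ηS| ≤ C₁ * d)
    (hred : ηhat ^ 2 - ηhatS ^ 2 ≤ ρ₂ * (η ^ 2 - ηS ^ 2) + C₂ * d ^ 2)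
    (hrel : d ^ 2 ≤ C₄ ^ 2 * (η ^ 2 - ηS ^ 2)) :
    ηhat ^ 2 ≤ quasiMonotonicityConstantSq C₁ C₂ C₄ ρ₂ * η ^ 2 := by
  have hd : d ^ 2 ≤ C₄ ^ 2 * η ^ 2 :=
    hrel.trans (mul_le_mul_of_nonneg_left (by linarith [sq_nonneg ηS]) (sq_nonneg C₄))
  have hηhatS := sq_le_two_mul_sq_add_of_abs_sub_le hηhatS hstab
  unfold quasiMonotonicityConstantSq
  linarith [mul_le_mul_of_nonneg_left hd (sq_nonneg C₁), mul_le_mul_of_nonneg_left hd hC₂,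
    mul_nonneg hρ₂ (sq_nonneg ηS)]

theorem stmt_10_general (C₁ C₂ C₄ ρ₂ : ℝ)
    (hC₂ : 0 ≤ C₂) (hρ₂0 : 0 < ρ₂) :
    ∃ Cmon : ℝ, 1 ≤ Cmon ∧
      ∀ η ηhat d ηS ηhatS : ℝ,
        0 ≤ η → 0 ≤ ηhat → 0 ≤ d → 0 ≤ ηS → 0 ≤ ηhatS →
        ηS ≤ η → ηhatS ≤ ηhat →
        |ηhatS - ηS| ≤ C₁ * d →
        ηhat ^ 2 - ηhatS ^ 2 ≤ ρ₂ * (η ^ 2 - ηS ^ 2) + C₂ * d ^ 2 →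
        d ^ 2 ≤ C₄ ^ 2 * (η ^ 2 - ηS ^ 2) →
        ηhat ≤ Cmon * η := by
  refine ⟨√(quasiMonotonicityConstantSq C₁ C₂ C₄ ρ₂),
    one_le_sqrt.mpr (one_le_quasiMonotonicityConstantSq hC₂ hρ₂0.le), ?_⟩
  intro η ηhat d ηS ηhatS hη _ _ hηS hηhatS hSη _ hstab hred hrel
  exact le_sqrt_mul_of_sq_le_mul_sq hη <| sq_le_quasiMonotonicityConstantSq_mul_sq hC₂ hρ₂0.le
    hηhatS (pow_le_pow_left₀ hηS hSη 2) hstab hred hrel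

/-- Quasi-monotonicity of the estimator under refinement: stability (A1),
reduction (A2) and discrete reliability (A4) imply `η̂ ≤ C_mon η` with a constant
depending only on `C₁, C₂, C₄, ρ₂`. Here `ηS, η̂S` denote the square roots of the
sums of squared indicators over the common (non-refined) elements. -/
theorem stmt_10 (C₁ C₂ C₄ ρ₂ : ℝ)
    (hC₁ : 0 < C₁) (hC₂ : 0 ≤ C₂) (hC₄ : 0 < C₄) (hρ₂0 : 0 < ρ₂) (hρ₂1 : ρ₂ < 1) :
    ∃ Cmon : ℝ, 1 ≤ Cmon ∧
      ∀ η ηhat d ηS ηhatS : ℝ,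
        0 ≤ η → 0 ≤ ηhat → 0 ≤ d → 0 ≤ ηS → 0 ≤ ηhatS →
        ηS ≤ η → ηhatS ≤ ηhat →
        |ηhatS - ηS| ≤ C₁ * d →
        ηhat ^ 2 - ηhatS ^ 2 ≤ ρ₂ * (η ^ 2 - ηS ^ 2) + C₂ * d ^ 2 →
        d ^ 2 ≤ C₄ ^ 2 * (η ^ 2 - ηS ^ 2) →
        ηhat ≤ Cmon * η :=
  stmt_10_general C₁ C₂ C₄ ρ₂ hC₂ hρ₂0
end

section
/- Let (M_ℓ)_{ℓ≥0} be the marked sets of an adaptive algorithm with meshes satisfying |𝒯_ℓ| − |𝒯_0| ≤ C_mesh ∑_{k=0}^{ℓ−1} |M_k| (mesh-closure estimate), and suppose |M_k| ≤ C_M B^{1/s} η_k^{−1/s} for all k where B ≥ 0, s > 0 and (η_k) satisfies inverse summability ∑_{k=0}^{ℓ−1} η_k^{−1/s} ≤ C(s) η_ℓ^{−1/s}. Then |𝒯_ℓ| − |𝒯_0| ≤ C_mesh C_M C(s) B^{1/s} η_ℓ^{−1/s}, and consequently η_ℓ (|𝒯_ℓ| − |𝒯_0| + 1)^s ≤ C'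 (B + η_0 · const) for a constant C' depending only on C_mesh, C_M, C(s), s. -/
/-!
Summing the marking bound `|M_k| ≲ B^{1/s} η_k^{-1/s}` over `k < ℓ` and applying inverse
summability turns the mesh-closure estimate into `|𝒯_ℓ| - |𝒯_0| ≲ B^{1/s} η_ℓ^{-1/s}`.
Raising this to the power `s` and multiplying by `η_ℓ` gives a bound `≲ B`, while the
remaining `+ 1` costs `η_ℓ ≲ η_0`, which is the `k = 0` term of inverse summability.
-/

open Finset

namespace Real

lemma add_rpow_le_two_rpow_mul_rpow_add_rpow {a b p : ℝ} (ha : 0 ≤ a) (hb : 0 ≤ b)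
    (hp : 0 ≤ p) : (a + b) ^ p ≤ 2 ^ p * (a ^ p + b ^ p) := calc
  (a + b) ^ p ≤ (2 * max a b) ^ p := by
    rw [two_mul]; gcongr; exacts [le_max_left a b, le_max_right a b]
  _ = 2 ^ p * max a b ^ p := mul_rpow zero_le_two (le_max_of_le_left ha)
  _ = 2 ^ p * max (a ^ p) (b ^ p) := by
    rcases le_total a b with h | h
    · rw [max_eq_right h, max_eq_right (rpow_le_rpow ha h hp)]
    · rw [max_eq_left h, max_eq_left (rpow_le_rpow hb h hp)]
  _ ≤ 2 ^ p * (a ^ p + b ^ p) := by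
    gcongr; exact max_le_add_of_nonneg (rpow_nonneg ha p) (rpow_nonneg hb p)

lemma rpow_le_abs_rpow (x p : ℝ) : x ^ p ≤ |x| ^ p :=
  (le_abs_self _).trans (abs_rpow_le_abs_rpow x p)

lemma rpow_neg_one_div_rpow {x p : ℝ} (hx : 0 ≤ x) (hp : p ≠ 0) :
    (x ^ (-(1 / p))) ^ p = x⁻¹ := by
  rw [rpow_neg hx, inv_rpow (rpow_nonneg hx _), one_div, rpow_inv_rpow hx hp]

lemma le_rpow_mul_of_rpow_neg_one_div_le {a b c p : ℝ} (ha : 0 < a) (hb : 0 < b) (hc : 0 ≤ c)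
    (hp : 0 < p) (h : a ^ (-(1 / p)) ≤ c * b ^ (-(1 / p))) : b ≤ c ^ p * a := by
  have h' := rpow_le_rpow (rpow_nonneg ha.le _) h hp.le
  rw [mul_rpow hc (rpow_nonneg hb.le _), rpow_neg_one_div_rpow ha.le hp.ne',
    rpow_neg_one_div_rpow hb.le hp.ne'] at h'
  rwa [inv_le_iff_one_le_mul₀' ha, ← mul_assoc, mul_comm a, ← div_eq_mul_inv,
    one_le_div hb] at h'

lemma mul_rpow_mul_rpow_one_div_mul_rpow_neg_one_div {C B x p : ℝ} (hC : 0 ≤ C) (hB : 0 ≤ B)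
    (hx : 0 < x) (hp : p ≠ 0) :
    x * (C * B ^ (1 / p) * x ^ (-(1 / p))) ^ p = C ^ p * B := by
  rw [mul_rpow (by positivity) (rpow_nonneg hx.le _), mul_rpow hC (rpow_nonneg hB _),
    rpow_neg_one_div_rpow hx.le hp, one_div, rpow_inv_rpow hB hp]
  field_simp

end Real

lemma le_of_closure_of_marking_of_inverse_summable {d Cmesh A Cs : ℝ} {M e : ℕ → ℝ} {ℓ : ℕ}
    (hCmesh : 0 ≤ Cmesh) (hA : 0 ≤ A) (hclosure : d ≤ Cmesh * ∑ k ∈ range ℓ, M k)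
    (hmark : ∀ k, M k ≤ A * e k) (hinvsum : ∑ k ∈ range ℓ, e k ≤ Cs * e ℓ) :
    d ≤ Cmesh * A * Cs * e ℓ := calc
  d ≤ Cmesh * ∑ k ∈ range ℓ, M k := hclosure
  _ ≤ Cmesh * (A * ∑ k ∈ range ℓ, e k) := by
    gcongr; rw [mul_sum]; exact sum_le_sum fun k _ => hmark k
  _ ≤ Cmesh * (A * (Cs * e ℓ)) := by gcongr
  _ = Cmesh * A * Cs * e ℓ := by ring

lemma le_max_one_rpow_mul_of_inverse_summable {η : ℕ → ℝ} {Cs s : ℝ} (hη : ∀ k, 0 < η k)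
    (hCs : 0 ≤ Cs) (hs : 0 < s)
    (hinvsum : ∀ ℓ, ∑ k ∈ range ℓ, η k ^ (-(1 / s)) ≤ Cs * η ℓ ^ (-(1 / s))) (ℓ : ℕ) :
    η ℓ ≤ max 1 (Cs ^ s) * η 0 := by
  rcases Nat.eq_zero_or_pos ℓ with rfl | hℓ
  · exact le_mul_of_one_le_left (hη 0).le (le_max_left _ _)
  have hfirst : η 0 ^ (-(1 / s)) ≤ Cs * η ℓ ^ (-(1 / s)) :=
    (single_le_sum (fun k _ => (Real.rpow_pos_of_pos (hη k) _).le) (mem_range.2 hℓ)).trans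
      (hinvsum ℓ)
  calc η ℓ ≤ Cs ^ s * η 0 :=
        Real.le_rpow_mul_of_rpow_neg_one_div_le (hη 0) (hη ℓ) hCs hs hfirst
    _ ≤ max 1 (Cs ^ s) * η 0 := mul_le_mul_of_nonneg_right (le_max_right _ _) (hη 0).le

lemma rpow_add_one_le {x n K s : ℝ} (hn : 0 ≤ n) (hK : 0 ≤ K) (hs : 0 ≤ s) (hnx : -n ≤ x)
    (hxK : x ≤ K) : (x + 1) ^ s ≤ 2 ^ s * ((n + 1) ^ s + K ^ s) := calc
  (x + 1) ^ s ≤ |x + 1| ^ s := Real.rpow_le_abs_rpow _ _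
  _ ≤ (n + 1 + K) ^ s := by
    gcongr; exact abs_le.2 ⟨by linarith, by linarith⟩
  _ ≤ 2 ^ s * ((n + 1) ^ s + K ^ s) :=
    Real.add_rpow_le_two_rpow_mul_rpow_add_rpow (by positivity) hK hs

/-- Final assembly of the quasi-optimality proof: the mesh-closure estimate, the
bound on the number of marked elements and inverse summability yield
`|𝒯_ℓ| − |𝒯_0| ≤ C_mesh C_M C(s) B^{1/s} η_ℓ^{-1/s}` and consequently the
optimal rate estimate `η_ℓ (|𝒯_ℓ| − |𝒯_0| + 1)^s ≤ C' (B + η_0)`. -/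
theorem stmt_15 (card𝒯 Mcard : ℕ → ℕ) (η : ℕ → ℝ)
    (Cmesh CM Cs B s : ℝ)
    (hη : ∀ ℓ, 0 < η ℓ) (hCmesh : 0 < Cmesh) (hCM : 0 < CM) (hCs : 0 < Cs)
    (hB : 0 ≤ B) (hs : 0 < s)
    (hclosure : ∀ ℓ, (card𝒯 ℓ : ℝ) - card𝒯 0 ≤ Cmesh * ∑ k ∈ Finset.range ℓ, (Mcard k : ℝ))
    (hmark : ∀ k, (Mcard k : ℝ) ≤ CM * B ^ (1 / s) * η k ^ (-(1 / s)))
    (hinvsum : ∀ ℓ, ∑ k ∈ Finset.range ℓ, η k ^ (-(1 / s)) ≤ Cs * η ℓ ^ (-(1 / s))) :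
    (∀ ℓ, (card𝒯 ℓ : ℝ) - card𝒯 0 ≤ Cmesh * CM * Cs * B ^ (1 / s) * η ℓ ^ (-(1 / s))) ∧
      ∃ C' : ℝ, 0 < C' ∧
        ∀ ℓ, η ℓ * ((card𝒯 ℓ : ℝ) - card𝒯 0 + 1) ^ s ≤ C' * (B + η 0) := by
  have hgrowth (ℓ : ℕ) :
      (card𝒯 ℓ : ℝ) - card𝒯 0 ≤ Cmesh * CM * Cs * B ^ (1 / s) * η ℓ ^ (-(1 / s)) :=
    (le_of_closure_of_marking_of_inverse_summable hCmesh.le (by positivity) (hclosure ℓ)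
      hmark (hinvsum ℓ)).trans_eq (by ring)
  refine ⟨hgrowth, ?_⟩
  set C := Cmesh * CM * Cs
  set n : ℝ := (card𝒯 0 : ℝ)
  set D := max 1 (Cs ^ s)
  refine ⟨2 ^ s * (D * (n + 1) ^ s + C ^ s), by positivity, fun ℓ => ?_⟩
  have hgrowth_rpow : η ℓ * (C * B ^ (1 / s) * η ℓ ^ (-(1 / s))) ^ s = C ^ s * B :=
    Real.mul_rpow_mul_rpow_one_div_mul_rpow_neg_one_div (by positivity) hB (hη ℓ) hs.ne'
  calc η ℓ * ((card𝒯 ℓ : ℝ) - n + 1) ^ s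
      ≤ η ℓ * (2 ^ s * ((n + 1) ^ s + (C * B ^ (1 / s) * η ℓ ^ (-(1 / s))) ^ s)) := by
        refine mul_le_mul_of_nonneg_left ?_ (hη ℓ).le
        refine rpow_add_one_le (Nat.cast_nonneg _) ?_ hs.le ?_ (hgrowth ℓ)
        · exact mul_nonneg (by positivity) (Real.rpow_pos_of_pos (hη ℓ) _).le
        · linarith [(card𝒯 ℓ).cast_nonneg (α := ℝ)]
    _ = 2 ^ s * (η ℓ * (n + 1) ^ s + C ^ s * B) := by rw [← hgrowth_rpow]; ring
    _ ≤ 2 ^ s * (D * η 0 * (n + 1) ^ s + C ^ s * B) := by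
        gcongr; exact le_max_one_rpow_mul_of_inverse_summable hη hCs.le hs hinvsum ℓ
    _ = 2 ^ s * (D * (n + 1) ^ s + C ^ s) * (B + η 0)
          - 2 ^ s * (D * (n + 1) ^ s * B + C ^ s * η 0) := by ring
    _ ≤ 2 ^ s * (D * (n + 1) ^ s + C ^ s) * (B + η 0) :=
        sub_le_self _ (by have := (hη 0).le; positivity)
end
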